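/- Let E be a 2-uniformly smooth real Banach space, i.e., ρ_E(τ) ≤ K·τ² for all τ > 0 for some K > 0. Then the normalized duality mapping J: E → E* is Lipschitz continuous: there exists a constant M (one may take M = 16K) such that ‖Jx − Jy‖ ≤ M‖x − y‖ for all x, y ∈ E. -/

import Mathlib

/-!
Write `x = ‖x‖ • u` and `J x = ‖x‖ • f` with `u` a unit vector and `f` a norm-one functional with
`f u = 1`. For two such pairs `(u, f)`, `(v, g)` the bound `ρ_E(τ) ≤ Kτ²` gives
`(f - g) h ≤ 2K (‖u - v‖² + ‖h‖²)` for every `h`; optimising over the scale of `h` yields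
`‖f - g‖ ≤ 4K ‖u - v‖`. Restoring the radii costs a factor `2` and an additive `1`, and
`1 ≤ 4K` holds in every nontrivial space, so `8K + 1 ≤ 16K`.
-/

open Set

/-- Modulus of smoothness of a normed space `E`. -/
noncomputable def smoothnessModulus (E : Type*) [NormedAddCommGroup E] [NormedSpace ℝ E]
    (τ : ℝ) : ℝ :=
  sSup {t : ℝ | ∃ x y : E, ‖x‖ ≤ 1 ∧ ‖y‖ ≤ 1 ∧ t = (‖x + τ • y‖ + ‖x - τ • y‖) / 2 - 1}

lemma le_two_mul_mul_of_forall_le_div {a B c : ℝ} (hB : 0 ≤ B) (hc : 0 ≤ c)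
    (h : ∀ r > 0, a ≤ B * (c ^ 2 + r ^ 2) / r) : a ≤ 2 * B * c := by
  -- `r = c` would do, except when `c = 0`: then the infimum over `r` is not attained.
  refine le_of_forall_pos_le_add fun ε hε => ?_
  set r := c + ε / (B + 1)
  have hr : 0 < r := by positivity
  have hcr : c ≤ r := le_add_of_nonneg_right (by positivity)
  calc a ≤ B * (c ^ 2 + r ^ 2) / r := h r hr
    _ ≤ B * (c + r) := by
      rw [div_le_iff₀ hr]
      nlinarith [mul_le_mul_of_nonneg_left hcr hc]
    _ = 2 * B * c + B / (B + 1) * ε := by ring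
    _ ≤ 2 * B * c + ε := by
      gcongr
      exact mul_le_of_le_one_left hε.le ((div_le_one (by positivity)).2 (by linarith))

section

variable {E : Type*} [NormedAddCommGroup E] [NormedSpace ℝ E]

lemma ContinuousLinearMap.apply_le_norm_of_norm_le_one {f : E →L[ℝ] ℝ} (hf : ‖f‖ ≤ 1) (x : E) :
    f x ≤ ‖x‖ :=
  (le_abs_self _).trans (by simpa using f.le_of_opNorm_le hf x)

lemma ContinuousLinearMap.opNorm_le_of_apply_le_sq_add_sq (φ : E →L[ℝ] ℝ) {B c : ℝ}
    (hB : 0 ≤ B) (hc : 0 ≤ c) (h : ∀ x, φ x ≤ B * (c ^ 2 + ‖x‖ ^ 2)) : ‖φ‖ ≤ 2 * B * c := by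
  refine le_two_mul_mul_of_forall_le_div hB hc fun r hr =>
    φ.opNorm_bound_of_ball_bound hr _ fun z hz => ?_
  have hz : B * (c ^ 2 + ‖z‖ ^ 2) ≤ B * (c ^ 2 + r ^ 2) := by
    gcongr
    exact mem_closedBall_zero_iff.1 hz
  have hneg := h (-z)
  rw [map_neg, norm_neg] at hneg
  rw [Real.norm_eq_abs, abs_le]
  constructor <;> linarith [h z]

lemma le_smoothnessModulus {τ : ℝ} {x y : E} (hx : ‖x‖ ≤ 1) (hy : ‖y‖ ≤ 1) :
    (‖x + τ • y‖ + ‖x - τ • y‖) / 2 - 1 ≤ smoothnessModulus E τ := by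
  refine le_csSup ⟨|τ|, ?_⟩ ⟨x, y, hx, hy, rfl⟩
  rintro t ⟨a, b, ha, hb, rfl⟩
  have hτb : ‖τ • b‖ ≤ |τ| := by
    rw [norm_smul, Real.norm_eq_abs]
    exact mul_le_of_le_one_right (abs_nonneg τ) hb
  linarith [norm_add_le a (τ • b), norm_sub_le a (τ • b)]

-- `ρ_E(τ) ≤ K τ²` unfolded at `τ = ‖h‖`, `y = h / ‖h‖`.
variable (E) in
def IsTwoUniformlySmoothWith (K : ℝ) : Prop :=
  ∀ u h : E, ‖u‖ ≤ 1 → ‖u + h‖ + ‖u - h‖ ≤ 2 + 2 * K * ‖h‖ ^ 2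

lemma isTwoUniformlySmoothWith_of_smoothnessModulus_le {K : ℝ}
    (hρ : ∀ τ > (0:ℝ), smoothnessModulus E τ ≤ K * τ ^ 2) : IsTwoUniformlySmoothWith E K := by
  intro u h hu
  rcases eq_or_ne h 0 with rfl | hh
  · simp only [add_zero, sub_zero, norm_zero]
    linarith
  have hτ : 0 < ‖h‖ := norm_pos_iff.2 hh
  have hunit : ‖‖h‖⁻¹ • h‖ = 1 := by rw [norm_smul, norm_inv, norm_norm, inv_mul_cancel₀ hτ.ne']
  have hle := le_smoothnessModulus (τ := ‖h‖) hu hunit.le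
  rw [smul_inv_smul₀ hτ.ne'] at hle
  linarith [hρ _ hτ]

namespace IsTwoUniformlySmoothWith

variable {K : ℝ}

lemma one_le_four_mul [Nontrivial E] (hS : IsTwoUniformlySmoothWith E K) : 1 ≤ 4 * K := by
  obtain ⟨h, hh⟩ := exists_norm_eq E (zero_le_two : (0:ℝ) ≤ 2)
  have := hS 0 h (by simp)
  rw [zero_add, zero_sub, norm_neg, hh] at this
  linarith

lemma norm_sub_le_of_norming (hS : IsTwoUniformlySmoothWith E K) {u v : E}
    {f g : E →L[ℝ] ℝ} (hu : ‖u‖ = 1) (hv : ‖v‖ ≤ 1) (hf : ‖f‖ ≤ 1) (hg : ‖g‖ ≤ 1)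
    (hfu : f u = 1) (hgv : g v = 1) : ‖f - g‖ ≤ 4 * K * ‖u - v‖ := by
  have : Nontrivial E := nontrivial_of_ne u 0 (by rintro rfl; simp at hu)
  have hK : 0 ≤ K := by linarith [hS.one_le_four_mul]
  -- testing `g` at the reflection `v - (u - v)` of `u` through `v`
  have hgu : 1 - g u ≤ 2 * K * ‖u - v‖ ^ 2 := by
    have hsmooth := hS v (u - v) hv
    have hreflect := g.apply_le_norm_of_norm_le_one hg (v - (u - v))
    rw [add_sub_cancel, hu] at hsmooth
    rw [map_sub, map_sub, hgv] at hreflect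
    linarith
  have hquad : ∀ h, (f - g) h ≤ 2 * K * (‖u - v‖ ^ 2 + ‖h‖ ^ 2) := by
    intro h
    have hsmooth := hS u h hu.le
    have hplus := f.apply_le_norm_of_norm_le_one hf (u + h)
    have hminus := g.apply_le_norm_of_norm_le_one hg (u - h)
    rw [map_add, hfu] at hplus
    rw [map_sub] at hminus
    rw [sub_apply]
    linarith
  calc ‖f - g‖ ≤ 2 * (2 * K) * ‖u - v‖ :=
        (f - g).opNorm_le_of_apply_le_sq_add_sq (by positivity) (norm_nonneg _) hquad
    _ = 4 * K * ‖u - v‖ := by ring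

end IsTwoUniformlySmoothWith

lemma exists_eq_norm_smul_of_duality [Nontrivial E] {J : E → E →L[ℝ] ℝ}
    (hJ : ∀ x, J x x = ‖x‖ ^ 2) (hJn : ∀ x, ‖J x‖ = ‖x‖) (x : E) :
    ∃ (u : E) (f : E →L[ℝ] ℝ), ‖u‖ = 1 ∧ ‖f‖ ≤ 1 ∧ f u = 1 ∧ x = ‖x‖ • u ∧ J x = ‖x‖ • f := by
  rcases eq_or_ne x 0 with rfl | hx
  · obtain ⟨u, hu⟩ := exists_norm_eq E zero_le_one
    refine ⟨u, J u, hu, ((hJn u).trans hu).le, by rw [hJ, hu, one_pow], by simp, ?_⟩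
    simpa using hJn 0
  have hx' : ‖x‖ ≠ 0 := norm_ne_zero_iff.2 hx
  refine ⟨‖x‖⁻¹ • x, ‖x‖⁻¹ • J x, norm_smul_inv_norm hx, ?_, ?_,
    (smul_inv_smul₀ hx' x).symm, (smul_inv_smul₀ hx' _).symm⟩
  · rw [norm_smul, hJn, norm_inv, norm_norm, inv_mul_cancel₀ hx']
  · rw [map_smul, smul_apply, hJ, smul_eq_mul, smul_eq_mul]
    field_simp

end

lemma norm_smul_sub_smul_le {F G : Type*} [NormedAddCommGroup F] [NormedSpace ℝ F]
    [NormedAddCommGroup G] [NormedSpace ℝ G] {u v : F} {f g : G} {L r s : ℝ}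
    (hu : ‖u‖ = 1) (hv : ‖v‖ = 1) (hf : ‖f‖ ≤ 1) (hg : ‖g‖ ≤ 1)
    (hfg : ‖f - g‖ ≤ L * ‖u - v‖) (hL : 0 ≤ L) (hr : 0 ≤ r) (hs : 0 ≤ s) :
    ‖r • f - s • g‖ ≤ (2 * L + 1) * ‖r • u - s • v‖ := by
  wlog hsr : s ≤ r generalizing u v f g r s
  · rw [norm_sub_rev f, norm_sub_rev u] at hfg
    rw [norm_sub_rev, norm_sub_rev (r • u)]
    exact this hv hu hg hf hfg hs hr (le_of_not_ge hsr)
  have hradii : r - s ≤ ‖r • u - s • v‖ := by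
    simpa [norm_smul, abs_of_nonneg, hr, hs, hu, hv] using norm_sub_norm_le (r • u) (s • v)
  have hdirections : s * ‖u - v‖ ≤ (r - s) + ‖r • u - s • v‖ :=
    calc s * ‖u - v‖ = ‖s • (u - v)‖ := by rw [norm_smul, Real.norm_of_nonneg hs]
      _ = ‖(s - r) • u + (r • u - s • v)‖ := by
          congr 1
          module
      _ ≤ ‖(s - r) • u‖ + ‖r • u - s • v‖ := norm_add_le _ _
      _ = (r - s) + ‖r • u - s • v‖ := by
          rw [norm_smul, hu, Real.norm_eq_abs, abs_of_nonpos (by linarith)]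
          ring
  calc ‖r • f - s • g‖ = ‖s • (f - g) + (r - s) • f‖ := by
        congr 1
        module
    _ ≤ s * ‖f - g‖ + (r - s) * ‖f‖ := by
        refine (norm_add_le _ _).trans_eq ?_
        rw [norm_smul, norm_smul, Real.norm_of_nonneg hs, Real.norm_of_nonneg (by linarith)]
    _ ≤ s * (L * ‖u - v‖) + (r - s) * 1 := by gcongr
    _ ≤ (2 * L + 1) * ‖r • u - s • v‖ := by nlinarith

theorem stmt7_general {E : Type*} [NormedAddCommGroup E] [NormedSpace ℝ E]
    (J : E → (E →L[ℝ] ℝ))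
    (hJ : ∀ x : E, J x x = ‖x‖ ^ 2) (hJn : ∀ x : E, ‖J x‖ = ‖x‖)
    (K : ℝ)
    (hρ : ∀ τ > (0:ℝ), smoothnessModulus E τ ≤ K * τ ^ 2) :
    ∃ M : ℝ, M = 16 * K ∧ ∀ x y : E, ‖J x - J y‖ ≤ M * ‖x - y‖ := by
  refine ⟨16 * K, rfl, fun x y => ?_⟩
  rcases subsingleton_or_nontrivial E with hE | hE
  · simp [Subsingleton.elim x y]
  have hS := isTwoUniformlySmoothWith_of_smoothnessModulus_le hρ
  have hK := hS.one_le_four_mul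
  obtain ⟨u, f, hu, hf, hfu, hx, hJx⟩ := exists_eq_norm_smul_of_duality hJ hJn x
  obtain ⟨v, g, hv, hg, hgv, hy, hJy⟩ := exists_eq_norm_smul_of_duality hJ hJn y
  have hfg := hS.norm_sub_le_of_norming hu hv.le hf hg hfu hgv
  calc ‖J x - J y‖ = ‖‖x‖ • f - ‖y‖ • g‖ := by rw [hJx, hJy]
    _ ≤ (2 * (4 * K) + 1) * ‖‖x‖ • u - ‖y‖ • v‖ :=
        norm_smul_sub_smul_le hu hv hf hg hfg (by linarith) (norm_nonneg _) (norm_nonneg _)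
    _ = (8 * K + 1) * ‖x - y‖ := by rw [← hx, ← hy]; ring
    _ ≤ 16 * K * ‖x - y‖ := by gcongr; linarith

theorem stmt7 {E : Type*} [NormedAddCommGroup E] [NormedSpace ℝ E] [CompleteSpace E]
    (J : E → (E →L[ℝ] ℝ))
    (hJ : ∀ x : E, J x x = ‖x‖ ^ 2) (hJn : ∀ x : E, ‖J x‖ = ‖x‖)
    (K : ℝ) (hK : 0 < K)
    (hρ : ∀ τ > (0:ℝ), smoothnessModulus E τ ≤ K * τ ^ 2) :
    ∃ M : ℝ, M = 16 * K ∧ ∀ x y : E, ‖J x - J y‖ ≤ M * ‖x - y‖ :=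
  stmt7_general J hJ hJn K hρ
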